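/- arXiv:2408.06630 — 6 statements merged into one kernel-verified Lean document; each statement's English description precedes it below -/
import Mathlib

section
/- The following are equivalent for a Banach lattice E: (1) E is ∞-convex with ∞-convexity constant 1, i.e. ‖|x₁| ⊔ ⋯ ⊔ |xₙ|‖ ≤ max(‖x₁‖, …, ‖xₙ‖) for all n and all x₁, …, xₙ ∈ E; (2) for every x ∈ E there exists a contractive vector lattice homomorphism φ : E → ℝ with |φ(x)| = ‖x‖, and |φ(x)| ≤ ‖x‖ for every contractive vector lattice homomorphism φ : E → ℝ (so that ‖x‖ = max_φ |φ(x)| over all such φ). -/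
/-!
The ∞-convexity inequality makes `y ↦ ‖y⁺‖` sup-sublinear (`IsSupSublinear`). By Zorn's lemma a sup-sublinear `p`
dominates a minimal one `q`, and minimality forces `q` to be odd, hence linear: the shift
`y ↦ inf_{t ≥ 0} (q (y + t • w) - t * q w)` is again sup-sublinear and below `q`, so it equals `q`,
and at `y = -w` it gives `q (-w) ≤ -q w`. Starting from the shift of `‖·⁺‖` along `|x|` produces a
linear `q ≤ ‖·⁺‖` with `q |x| = ‖x‖`; domination by `‖·⁺‖` makes `q` positive and contractive,
which upgrades `q (a ⊔ b) ≤ max (q a) (q b)` to an equality. Conversely, a contractive lattice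
homomorphism norming `|x₁| ⊔ ⋯ ⊔ |xₙ|` evaluates it to `max |φ xᵢ| ≤ max ‖xᵢ‖`.
-/

open Set Filter OrderDual
open scoped NNReal

theorem le_max_ciInf_ciInf {ι ι' : Type*} [Nonempty ι] [Nonempty ι'] {f : ι → ℝ} {g : ι' → ℝ}
    {c : ℝ} (h : ∀ i j, c ≤ max (f i) (g j)) : c ≤ max (⨅ i, f i) (⨅ j, g j) := by
  by_contra! hlt
  obtain ⟨i, hi⟩ := exists_lt_of_ciInf_lt (lt_of_le_of_lt (le_max_left _ _) hlt)
  obtain ⟨j, hj⟩ := exists_lt_of_ciInf_lt (lt_of_le_of_lt (le_max_right _ _) hlt)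
  exact (h i j).not_gt (max_lt hi hj)

section SupSublinear

variable {E : Type*} [AddCommGroup E] [Lattice E] [Module ℝ E]

structure IsSupSublinear (p : E → ℝ) : Prop where
  add_le : ∀ y z, p (y + z) ≤ p y + p z
  smul_le : ∀ t : ℝ, 0 ≤ t → ∀ y, p (t • y) ≤ t * p y
  sup_le : ∀ y z, p (y ⊔ z) ≤ max (p y) (p z)

noncomputable def sublinearShift (p : E → ℝ) (v y : E) : ℝ :=
  ⨅ t : ℝ≥0, p (y + (t : ℝ) • v) - t * p v

namespace IsSupSublinear

variable {p : E → ℝ}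

theorem map_zero (hp : IsSupSublinear p) : p 0 = 0 := by
  have hle : p 0 ≤ 0 := by simpa using hp.smul_le 0 le_rfl 0
  have hge : p 0 ≤ p 0 + p 0 := by simpa using hp.add_le 0 0
  linarith

theorem map_smul_of_nonneg (hp : IsSupSublinear p) {t : ℝ} (ht : 0 ≤ t) (y : E) :
    p (t • y) = t * p y := by
  rcases ht.eq_or_lt with rfl | ht
  · simp [hp.map_zero]
  refine (hp.smul_le t ht.le y).antisymm ?_
  have h := hp.smul_le t⁻¹ (inv_nonneg.mpr ht.le) (t • y)
  rw [inv_smul_smul₀ ht.ne'] at h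
  rwa [← le_div_iff₀' ht, div_eq_inv_mul]

theorem neg_map_neg_le (hp : IsSupSublinear p) (y : E) : -p (-y) ≤ p y := by
  have h := hp.add_le y (-y)
  rw [add_neg_cancel, hp.map_zero] at h
  linarith

theorem iInf {ι : Type*} [Nonempty ι] {q : ι → E → ℝ} (hq : ∀ i, IsSupSublinear (q i))
    (hdir : Directed (· ≥ ·) q) (hbdd : ∀ y, BddBelow (range fun i ↦ q i y)) :
    IsSupSublinear fun y ↦ ⨅ i, q i y where
  add_le y z := le_ciInf_add_ciInf fun i j ↦ by
    obtain ⟨k, hki, hkj⟩ := hdir i j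
    exact (ciInf_le (hbdd _) k).trans <| ((hq k).add_le y z).trans (add_le_add (hki y) (hkj z))
  smul_le t ht y := by
    rw [Real.mul_iInf_of_nonneg ht]
    exact le_ciInf fun i ↦ (ciInf_le (hbdd _) i).trans ((hq i).smul_le t ht y)
  sup_le y z := le_max_ciInf_ciInf fun i j ↦ by
    obtain ⟨k, hki, hkj⟩ := hdir i j
    exact (ciInf_le (hbdd _) k).trans <| ((hq k).sup_le y z).trans (max_le_max (hki y) (hkj z))

theorem bddBelow_sublinearShift (hp : IsSupSublinear p) (v y : E) :
    BddBelow (range fun t : ℝ≥0 ↦ p (y + (t : ℝ) • v) - t * p v) := by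
  refine ⟨-p (-y), ?_⟩
  rintro _ ⟨t, rfl⟩
  have h := hp.add_le (y + (t : ℝ) • v) (-y)
  rw [add_neg_cancel_comm, hp.map_smul_of_nonneg t.coe_nonneg] at h
  dsimp only
  linarith

theorem sublinearShift_le (hp : IsSupSublinear p) (v y : E) (t : ℝ≥0) :
    sublinearShift p v y ≤ p (y + (t : ℝ) • v) - t * p v :=
  ciInf_le (hp.bddBelow_sublinearShift v y) t

theorem sublinearShift_le_self (hp : IsSupSublinear p) (v y : E) :
    sublinearShift p v y ≤ p y := by
  simpa using hp.sublinearShift_le v y 0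

theorem sublinearShift_neg_le (hp : IsSupSublinear p) (v : E) :
    sublinearShift p v (-v) ≤ -p v := by
  simpa [hp.map_zero] using hp.sublinearShift_le v (-v) 1

theorem sublinearShift_antitone (hp : IsSupSublinear p) (v y : E) :
    Antitone fun t : ℝ≥0 ↦ p (y + (t : ℝ) • v) - t * p v := by
  intro s t hst
  have h := hp.add_le (y + (s : ℝ) • v) (((t : ℝ) - s) • v)
  rw [hp.map_smul_of_nonneg (sub_nonneg.mpr (NNReal.coe_le_coe.mpr hst)), add_assoc, ← add_smul,
    add_sub_cancel] at h
  dsimp only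
  linarith

protected theorem sublinearShift [IsOrderedAddMonoid E] (hp : IsSupSublinear p) (v : E) :
    IsSupSublinear (sublinearShift p v) where
  add_le y z := le_ciInf_add_ciInf fun s t ↦ by
    have h := hp.add_le (y + (s : ℝ) • v) (z + (t : ℝ) • v)
    rw [add_add_add_comm, ← add_smul] at h
    have := hp.sublinearShift_le v (y + z) (s + t)
    push_cast at this ⊢
    linarith
  smul_le t ht y := by
    refine (le_ciInf fun s ↦ ?_).trans_eq (Real.mul_iInf_of_nonneg ht _).symm
    have h := hp.sublinearShift_le v (t • y) (⟨t, ht⟩ * s)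
    rw [show ((⟨t, ht⟩ * s : ℝ≥0) : ℝ) = t * s from rfl, mul_smul, ← smul_add,
      hp.map_smul_of_nonneg ht] at h
    linarith
  sup_le y z := le_max_ciInf_ciInf fun s t ↦ by
    set u := max s t
    calc sublinearShift p v (y ⊔ z) ≤ p (y ⊔ z + (u : ℝ) • v) - u * p v :=
          hp.sublinearShift_le v _ u
      _ ≤ max (p (y + (u : ℝ) • v)) (p (z + (u : ℝ) • v)) - u * p v := by
          rw [sup_add]; exact sub_le_sub_right (hp.sup_le _ _) _
      _ = max (p (y + (u : ℝ) • v) - u * p v) (p (z + (u : ℝ) • v) - u * p v) :=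
          (max_sub_sub_right ..).symm
      _ ≤ _ := max_le_max (hp.sublinearShift_antitone v y (le_max_left s t))
          (hp.sublinearShift_antitone v z (le_max_right s t))

theorem exists_minimal_le (hp : IsSupSublinear p) : ∃ q ≤ p, Minimal IsSupSublinear q := by
  refine zorn_le_nonempty₀ (α := (E → ℝ)ᵒᵈ) {r | IsSupSublinear (ofDual r)}
    (fun c hcS hc r hr ↦ ?_) (toDual p) hp
  have : Nonempty c := ⟨⟨r, hr⟩⟩
  have hbdd : ∀ y, BddBelow (range fun i : c ↦ ofDual i.1 y) := fun y ↦ by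
    refine ⟨-ofDual r (-y), ?_⟩
    rintro _ ⟨i, rfl⟩
    rcases hc.total hr i.2 with hri | hir
    · exact (neg_le_neg (hri (-y))).trans ((hcS i.2).neg_map_neg_le y)
    · exact ((hcS hr).neg_map_neg_le y).trans (hir y)
  refine ⟨toDual fun y ↦ ⨅ i : c, ofDual i.1 y,
    IsSupSublinear.iInf (fun i ↦ hcS i.2) (directedOn_iff_directed.mp hc.directedOn) hbdd,
    fun i hi y ↦ ciInf_le (hbdd y) ⟨i, hi⟩⟩

theorem map_neg_of_minimal [IsOrderedAddMonoid E] {q : E → ℝ} (hq : Minimal IsSupSublinear q)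
    (w : E) : q (-w) = -q w := by
  have hshift : q ≤ sublinearShift q w :=
    hq.le_of_le (hq.prop.sublinearShift w) (hq.prop.sublinearShift_le_self w)
  have := (hshift (-w)).trans (hq.prop.sublinearShift_neg_le w)
  linarith [hq.prop.neg_map_neg_le w]

theorem exists_linearMap_le [IsOrderedAddMonoid E] (hp : IsSupSublinear p) (v : E) :
    ∃ f : E →ₗ[ℝ] ℝ, IsSupSublinear f ∧ ⇑f ≤ p ∧ f v = p v := by
  obtain ⟨q, hqp, hq⟩ := (hp.sublinearShift v).exists_minimal_le
  have hneg := map_neg_of_minimal hq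
  have hadd : ∀ y z, q (y + z) = q y + q z := fun y z ↦ by
    have := hq.prop.add_le (-y) (-z)
    rw [← neg_add, hneg, hneg, hneg] at this
    linarith [hq.prop.add_le y z]
  have hsmul : ∀ (t : ℝ) y, q (t • y) = t * q y := fun t y ↦ by
    rcases le_total 0 t with ht | ht
    · exact hq.prop.map_smul_of_nonneg ht y
    · have := hq.prop.map_smul_of_nonneg (neg_nonneg.mpr ht) y
      rw [neg_smul, hneg] at this
      linarith
  have hqv : -q v ≤ -p v := by
    simpa only [hneg] using (hqp (-v)).trans (hp.sublinearShift_neg_le v)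
  refine ⟨⟨⟨q, hadd⟩, hsmul⟩, hq.prop, fun y ↦ (hqp y).trans (hp.sublinearShift_le_self v y), ?_⟩
  exact ((hqp v).trans (hp.sublinearShift_le_self v v)).antisymm (neg_le_neg_iff.mp hqv)

end IsSupSublinear

end SupSublinear

theorem nonneg_of_two_pow_nsmul_nonneg {α : Type*} [Lattice α] [AddCommGroup α]
    [IsOrderedAddMonoid α] {a : α} (k : ℕ) (h : 0 ≤ 2 ^ k • a) : 0 ≤ a := by
  induction k generalizing a with
  | zero => simpa using h
  | succ k ih => exact nsmul_two_semiclosed (ih (by rwa [← mul_nsmul, ← pow_succ']))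

theorem map_abs_of_map_sup {F α β : Type*} [Lattice α] [AddGroup α] [Lattice β] [AddGroup β]
    [FunLike F α β] [AddMonoidHomClass F α β] (φ : F) (hφ : ∀ a b, φ (a ⊔ b) = φ a ⊔ φ b)
    (x : α) : φ |x| = |φ x| := by
  rw [abs, hφ, map_neg, abs]

section NormedLattice

variable {E : Type*} [NormedAddCommGroup E] [Lattice E] [HasSolidNorm E] [IsOrderedAddMonoid E]

theorem norm_le_norm_of_nonneg_of_le {a b : E} (ha : 0 ≤ a) (hab : a ≤ b) : ‖a‖ ≤ ‖b‖ :=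
  norm_le_norm_of_abs_le_abs <| by rwa [abs_of_nonneg ha, abs_of_nonneg (ha.trans hab)]

theorem norm_posPart_le (y : E) : ‖y⁺‖ ≤ ‖y‖ :=
  norm_le_norm_of_abs_le_abs <| by
    rw [abs_of_nonneg (posPart_nonneg y)]
    exact sup_le (le_abs_self y) (abs_nonneg y)

variable [NormedSpace ℝ E]

/- The order is only assumed compatible with addition. Nonnegativity of `t • y` follows for dyadic
`t` from `0 ≤ 2 • a → 0 ≤ a`, and for all `t ≥ 0` since the positive cone is closed. -/
instance : PosSMulMono ℝ E := .of_smul_nonneg fun t ht y hy ↦ by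
  have hdyadic : ∀ n : ℕ, 0 ≤ ((⌊t * 2 ^ n⌋₊ : ℝ) / 2 ^ n) • y := fun n ↦ by
    refine nonneg_of_two_pow_nsmul_nonneg n ?_
    rw [← Nat.cast_smul_eq_nsmul ℝ, smul_smul, Nat.cast_pow, Nat.cast_ofNat,
      mul_div_cancel₀ _ (by positivity), Nat.cast_smul_eq_nsmul]
    exact nsmul_nonneg hy _
  have hlim := (tendsto_nat_floor_mul_div_atTop ht).comp
    (tendsto_pow_atTop_atTop_of_one_lt (one_lt_two (α := ℝ)))
  exact isClosed_nonneg.mem_of_tendsto (hlim.smul_const y) (Eventually.of_forall hdyadic)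

theorem isSupSublinear_norm_posPart
    (hM : ∀ a b : E, 0 ≤ a → 0 ≤ b → ‖a ⊔ b‖ ≤ max ‖a‖ ‖b‖) :
    IsSupSublinear fun y : E ↦ ‖y⁺‖ where
  add_le y z := by
    refine (norm_le_norm_of_nonneg_of_le (posPart_nonneg _) ?_).trans (norm_add_le _ _)
    exact sup_le (add_le_add (le_posPart y) (le_posPart z))
      (add_nonneg (posPart_nonneg y) (posPart_nonneg z))
  smul_le t ht y := by
    calc ‖(t • y)⁺‖ ≤ ‖t • y⁺‖ := norm_le_norm_of_nonneg_of_le (posPart_nonneg _) <|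
          sup_le (smul_le_smul_of_nonneg_left (le_posPart y) ht) (smul_nonneg ht (posPart_nonneg y))
      _ = t * ‖y⁺‖ := by rw [norm_smul, Real.norm_of_nonneg ht]
  sup_le y z := by
    rw [posPart_def, posPart_def, posPart_def, sup_sup_distrib_right]
    exact hM _ _ le_sup_right le_sup_right

theorem exists_latticeHom_abs_eq_norm
    (hM : ∀ a b : E, 0 ≤ a → 0 ≤ b → ‖a ⊔ b‖ ≤ max ‖a‖ ‖b‖) (x : E) :
    ∃ φ : E →L[ℝ] ℝ, ‖φ‖ ≤ 1 ∧ (∀ a b, φ (a ⊔ b) = φ a ⊔ φ b) ∧ |φ x| = ‖x‖ := by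
  obtain ⟨f, hf, hfp, hfx⟩ := (isSupSublinear_norm_posPart hM).exists_linearMap_le |x|
  have hf_nonneg : ∀ y, 0 ≤ y → 0 ≤ f y := fun y hy ↦ by
    simpa [posPart_eq_zero.mpr (neg_nonpos.mpr hy)] using hfp (-y)
  have hf_mono : Monotone f := fun a b hab ↦ by
    simpa using hf_nonneg (b - a) (sub_nonneg.mpr hab)
  have hf_sup : ∀ a b, f (a ⊔ b) = f a ⊔ f b := fun a b ↦
    (hf.sup_le a b).antisymm (max_le (hf_mono le_sup_left) (hf_mono le_sup_right))
  have hf_bound : ∀ y, |f y| ≤ ‖y‖ := fun y ↦ abs_le.mpr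
    ⟨by linarith [(hfp (-y)).trans (norm_posPart_le (-y)), map_neg f y, norm_neg y],
      (hfp y).trans (norm_posPart_le y)⟩
  refine ⟨f.mkContinuous 1 fun y ↦ by simpa using hf_bound y,
    LinearMap.mkContinuous_norm_le _ zero_le_one _, hf_sup, ?_⟩
  rw [LinearMap.mkContinuous_apply, ← map_abs_of_map_sup f hf_sup, hfx,
    posPart_eq_self.mpr (abs_nonneg x), norm_abs_eq_norm]

end NormedLattice

theorem inftyConvex_iff_norm_attained_by_real_latticeHoms_general
    (E : Type) [NormedAddCommGroup E] [Lattice E] [HasSolidNorm E] [IsOrderedAddMonoid E] [NormedSpace ℝ E] :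
    (∀ (n : ℕ) (x : Fin (n + 1) → E),
        ‖Finset.univ.sup' Finset.univ_nonempty (fun i => |x i|)‖ ≤
          Finset.univ.sup' Finset.univ_nonempty (fun i => ‖x i‖)) ↔
    (∀ x : E,
        (∀ φ : E →L[ℝ] ℝ, ‖φ‖ ≤ 1 → (∀ a b : E, φ (a ⊔ b) = φ a ⊔ φ b) → |φ x| ≤ ‖x‖) ∧
        (∃ φ : E →L[ℝ] ℝ, ‖φ‖ ≤ 1 ∧ (∀ a b : E, φ (a ⊔ b) = φ a ⊔ φ b) ∧ |φ x| = ‖x‖)) := by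
  constructor
  · intro H x
    have hM : ∀ a b : E, 0 ≤ a → 0 ≤ b → ‖a ⊔ b‖ ≤ max ‖a‖ ‖b‖ := fun a b ha hb ↦ by
      simpa [Fin.univ_succ, abs_of_nonneg ha, abs_of_nonneg hb] using H 1 ![a, b]
    exact ⟨fun φ hφ _ ↦ by simpa using φ.le_of_opNorm_le hφ x, exists_latticeHom_abs_eq_norm hM x⟩
  · intro H n x
    set s := Finset.univ.sup' Finset.univ_nonempty fun i ↦ |x i|
    obtain ⟨-, φ, hφ, hφ_sup, hφ_s⟩ := H s
    have hs : 0 ≤ s :=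
      (abs_nonneg (x 0)).trans (Finset.le_sup' (fun i ↦ |x i|) (Finset.mem_univ 0))
    calc ‖s‖ = φ |s| := by rw [map_abs_of_map_sup φ hφ_sup, hφ_s]
      _ = Finset.univ.sup' Finset.univ_nonempty fun i ↦ |φ (x i)| := by
          rw [abs_of_nonneg hs, Finset.apply_sup'_eq_sup'_comp _ φ hφ_sup]
          simp only [Function.comp_def, map_abs_of_map_sup φ hφ_sup]
      _ ≤ Finset.univ.sup' Finset.univ_nonempty fun i ↦ ‖x i‖ :=
          Finset.sup'_mono_fun fun i _ ↦ by simpa using φ.le_of_opNorm_le hφ (x i)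

/-- A Banach lattice is ∞-convex with ∞-convexity constant 1 if and only if the norm of
every element is attained as a maximum over contractive vector lattice homomorphisms
into `ℝ`. -/
theorem inftyConvex_iff_norm_attained_by_real_latticeHoms
    (E : Type) [NormedAddCommGroup E] [Lattice E] [HasSolidNorm E] [IsOrderedAddMonoid E] [NormedSpace ℝ E] [CompleteSpace E] :
    (∀ (n : ℕ) (x : Fin (n + 1) → E),
        ‖Finset.univ.sup' Finset.univ_nonempty (fun i => |x i|)‖ ≤
          Finset.univ.sup' Finset.univ_nonempty (fun i => ‖x i‖)) ↔
    (∀ x : E,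
        (∀ φ : E →L[ℝ] ℝ, ‖φ‖ ≤ 1 → (∀ a b : E, φ (a ⊔ b) = φ a ⊔ φ b) → |φ x| ≤ ‖x‖) ∧
        (∃ φ : E →L[ℝ] ℝ, ‖φ‖ ≤ 1 ∧ (∀ a b : E, φ (a ⊔ b) = φ a ⊔ φ b) ∧ |φ x| = ‖x‖)) :=
  inftyConvex_iff_norm_attained_by_real_latticeHoms_general E
end

section
/- For every pre-ordered real vector space (V, V⁺) there exists a free vector lattice over (V, V⁺): a vector lattice F together with a positive linear map j : V → F such that for every vector lattice G and every positive linear map φ : V → G there exists a unique vector lattice homomorphism φ̄ : F → G with φ̄ ∘ j = φ. Moreover, F is generated by j(V) as a vector lattice: the only vector sublattice of F (subset closed under the linear operations and the lattice operations) containing j(V) is F itself. -/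
/-! Take vector-lattice terms over `V` and identify two terms when they take the same value under
every positive linear map into a vector lattice. Evaluating at all positive maps at once embeds
the quotient into a product of vector lattices, from which it inherits its vector-lattice
structure; the universal map is evaluation of terms, and uniqueness as well as generation by `V`
follow by induction on terms. -/

class VectorLattice (F : Type) extends Lattice F, AddCommGroup F, Module ℝ F where
  add_le_add_left' : ∀ a b : F, a ≤ b → ∀ c : F, c + a ≤ c + b
  smul_nonneg' : ∀ (r : ℝ) (a : F), 0 ≤ r → 0 ≤ a → 0 ≤ r • a

def IsWedge {V : Type} [AddCommGroup V] [Module ℝ V] (C : Set V) : Prop :=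
  0 ∈ C ∧ ∀ (a b : ℝ) (x y : V), 0 ≤ a → 0 ≤ b → x ∈ C → y ∈ C → a • x + b • y ∈ C

structure FreeVectorLatticeWitness (V : Type) [AddCommGroup V] [Module ℝ V]
    (C : Set V) where
  F : Type
  [instF : VectorLattice F]
  j : V →ₗ[ℝ] F
  j_pos : ∀ v ∈ C, 0 ≤ j v
  universal : ∀ (G : Type) [VectorLattice G] (φ : V →ₗ[ℝ] G), (∀ v ∈ C, 0 ≤ φ v) →
    ∃! ψ : F →ₗ[ℝ] G, (∀ a b : F, ψ (a ⊔ b) = ψ a ⊔ ψ b) ∧ ∀ v : V, ψ (j v) = φ v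
  generated : ∀ S : Set F, (∀ v : V, j v ∈ S) →
    (∀ a ∈ S, ∀ b ∈ S, a + b ∈ S) → (∀ (r : ℝ), ∀ a ∈ S, r • a ∈ S) →
    (∀ a ∈ S, ∀ b ∈ S, a ⊔ b ∈ S) → (∀ a ∈ S, ∀ b ∈ S, a ⊓ b ∈ S) →
    ∀ f : F, f ∈ S

namespace VectorLattice

variable {F : Type} [VectorLattice F]

instance : IsOrderedAddMonoid F where
  add_le_add_left a b h c := by simpa only [add_comm _ c] using add_le_add_left' a b h c

end VectorLattice

inductive VectorLatticeTerm (V : Type) : Type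
  | of : V → VectorLatticeTerm V
  | add : VectorLatticeTerm V → VectorLatticeTerm V → VectorLatticeTerm V
  | smul : ℝ → VectorLatticeTerm V → VectorLatticeTerm V
  | sup : VectorLatticeTerm V → VectorLatticeTerm V → VectorLatticeTerm V

variable {V : Type} [AddCommGroup V] [Module ℝ V]

def VectorLatticeTerm.eval {G : Type} [VectorLattice G] (φ : V →ₗ[ℝ] G) :
    VectorLatticeTerm V → G
  | of v => φ v
  | add t s => t.eval φ + s.eval φ
  | smul r t => r • t.eval φ
  | sup t s => t.eval φ ⊔ s.eval φ

structure PositiveMap (V : Type) [AddCommGroup V] [Module ℝ V] (C : Set V) : Type 1 where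
  G : Type
  [instG : VectorLattice G]
  toLinearMap : V →ₗ[ℝ] G
  nonneg : ∀ v ∈ C, 0 ≤ toLinearMap v

attribute [instance] PositiveMap.instG

def VectorLatticeTerm.evalAll (C : Set V) (t : VectorLatticeTerm V) :
    ∀ P : PositiveMap V C, P.G :=
  fun P => t.eval P.toLinearMap

/-- A quotient of terms rather than a subspace of the product over all positive maps, since that
product lives in `Type 1`. -/
def FreeVectorLattice (C : Set V) : Type :=
  Quotient (Setoid.ker (VectorLatticeTerm.evalAll C))

namespace FreeVectorLattice

open VectorLatticeTerm

variable {C : Set V}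

def mk : VectorLatticeTerm V → FreeVectorLattice C := Quotient.mk _

@[elab_as_elim]
theorem ind {p : FreeVectorLattice C → Prop} (h : ∀ t, p (mk t)) (a : FreeVectorLattice C) :
    p a :=
  Quotient.ind h a

def toPi : FreeVectorLattice C → ∀ P : PositiveMap V C, P.G := Setoid.kerLift _

theorem toPi_injective : Function.Injective (toPi : FreeVectorLattice C → _) :=
  Setoid.kerLift_injective _

instance : Zero (FreeVectorLattice C) := ⟨mk (of 0)⟩

instance : Add (FreeVectorLattice C) :=
  ⟨Quotient.map₂ add fun _ _ h₁ _ _ h₂ => congrArg₂ (· + ·) h₁ h₂⟩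

instance : SMul ℝ (FreeVectorLattice C) :=
  ⟨fun r => Quotient.map (smul r) fun _ _ h => congrArg (r • ·) h⟩

instance : Max (FreeVectorLattice C) :=
  ⟨Quotient.map₂ sup fun _ _ h₁ _ _ h₂ => congrArg₂ (· ⊔ ·) h₁ h₂⟩

instance : Neg (FreeVectorLattice C) := ⟨fun a => (-1 : ℝ) • a⟩
instance : Sub (FreeVectorLattice C) := ⟨fun a b => a + -b⟩
instance : SMul ℕ (FreeVectorLattice C) := ⟨fun n a => (n : ℝ) • a⟩
instance : SMul ℤ (FreeVectorLattice C) := ⟨fun n a => (n : ℝ) • a⟩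
instance : Min (FreeVectorLattice C) := ⟨fun a b => -(-a ⊔ -b)⟩
instance : LE (FreeVectorLattice C) := ⟨fun a b => toPi a ≤ toPi b⟩
instance : LT (FreeVectorLattice C) := ⟨fun a b => toPi a < toPi b⟩

theorem toPi_zero : toPi (0 : FreeVectorLattice C) = 0 :=
  funext fun P => P.toLinearMap.map_zero

theorem toPi_add (a b : FreeVectorLattice C) : toPi (a + b) = toPi a + toPi b :=
  ind (fun _ => ind (fun _ => rfl) b) a

theorem toPi_smul (r : ℝ) (a : FreeVectorLattice C) : toPi (r • a) = r • toPi a :=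
  ind (fun _ => rfl) a

theorem toPi_sup (a b : FreeVectorLattice C) : toPi (a ⊔ b) = toPi a ⊔ toPi b :=
  ind (fun _ => ind (fun _ => rfl) b) a

theorem toPi_neg (a : FreeVectorLattice C) : toPi (-a) = -toPi a :=
  (toPi_smul _ a).trans (neg_one_smul ℝ _)

theorem toPi_sub (a b : FreeVectorLattice C) : toPi (a - b) = toPi a - toPi b := by
  rw [sub_eq_add_neg (toPi a), ← toPi_neg, ← toPi_add]
  rfl

theorem toPi_nsmul (a : FreeVectorLattice C) (n : ℕ) : toPi (n • a) = n • toPi a :=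
  (toPi_smul _ a).trans (Nat.cast_smul_eq_nsmul ℝ n _)

theorem toPi_zsmul (a : FreeVectorLattice C) (n : ℤ) : toPi (n • a) = n • toPi a :=
  (toPi_smul _ a).trans (Int.cast_smul_eq_zsmul ℝ n _)

theorem toPi_inf (a b : FreeVectorLattice C) : toPi (a ⊓ b) = toPi a ⊓ toPi b := by
  rw [← neg_neg (toPi a ⊓ toPi b), neg_inf, ← toPi_neg, ← toPi_neg, ← toPi_sup, ← toPi_neg]
  rfl

instance : AddCommGroup (FreeVectorLattice C) :=
  toPi_injective.addCommGroup _ toPi_zero toPi_add toPi_neg toPi_sub toPi_nsmul toPi_zsmul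

instance : Module ℝ (FreeVectorLattice C) :=
  toPi_injective.module ℝ ⟨⟨toPi, toPi_zero⟩, toPi_add⟩ toPi_smul

instance : Lattice (FreeVectorLattice C) :=
  toPi_injective.lattice _ Iff.rfl Iff.rfl toPi_sup toPi_inf

theorem le_iff_toPi_le {a b : FreeVectorLattice C} : a ≤ b ↔ toPi a ≤ toPi b := Iff.rfl

instance : VectorLattice (FreeVectorLattice C) where
  add_le_add_left' a b h c := by
    rw [le_iff_toPi_le, toPi_add, toPi_add]
    exact add_le_add_right (le_iff_toPi_le.mp h) _
  smul_nonneg' r a hr ha := by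
    rw [le_iff_toPi_le, toPi_zero] at ha ⊢
    rw [toPi_smul]
    exact fun P => VectorLattice.smul_nonneg' r _ hr (ha P)

def of : V →ₗ[ℝ] FreeVectorLattice C where
  toFun v := mk (.of v)
  map_add' v w := toPi_injective <| funext fun P => P.toLinearMap.map_add v w
  map_smul' r v := toPi_injective <| funext fun P => P.toLinearMap.map_smul r v

theorem of_nonneg {v : V} (hv : v ∈ C) : 0 ≤ (of v : FreeVectorLattice C) := by
  rw [le_iff_toPi_le, toPi_zero]
  exact fun P => P.nonneg v hv

theorem induction_on {p : FreeVectorLattice C → Prop} (hof : ∀ v, p (of v))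
    (hadd : ∀ a, p a → ∀ b, p b → p (a + b)) (hsmul : ∀ (r : ℝ) a, p a → p (r • a))
    (hsup : ∀ a, p a → ∀ b, p b → p (a ⊔ b)) (a : FreeVectorLattice C) : p a := by
  induction a using ind with | h t => ?_
  induction t with
  | of v => exact hof v
  | add t s ht hs => exact hadd (mk t) ht (mk s) hs
  | smul r t ht => exact hsmul r (mk t) ht
  | sup t s ht hs => exact hsup (mk t) ht (mk s) hs

theorem hom_ext {G : Type} [VectorLattice G] {ψ ψ' : FreeVectorLattice C →ₗ[ℝ] G}
    (hψ : ∀ a b, ψ (a ⊔ b) = ψ a ⊔ ψ b) (hψ' : ∀ a b, ψ' (a ⊔ b) = ψ' a ⊔ ψ' b)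
    (h : ∀ v, ψ (of v) = ψ' (of v)) : ψ = ψ' :=
  LinearMap.ext <| induction_on h
    (fun a ha b hb => by rw [map_add, map_add, ha, hb])
    (fun _ a ha => by rw [map_smul, map_smul, ha])
    (fun a ha b hb => by rw [hψ, hψ', ha, hb])

section lift

variable {G : Type} [VectorLattice G] (φ : V →ₗ[ℝ] G) (hφ : ∀ v ∈ C, 0 ≤ φ v)

def lift : FreeVectorLattice C →ₗ[ℝ] G where
  toFun := Quotient.lift (VectorLatticeTerm.eval φ) fun _ _ h => congrFun h ⟨G, φ, hφ⟩
  map_add' a b := ind (fun _ => ind (fun _ => rfl) b) a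
  map_smul' _ a := ind (fun _ => rfl) a

theorem lift_sup (a b : FreeVectorLattice C) : lift φ hφ (a ⊔ b) = lift φ hφ a ⊔ lift φ hφ b :=
  ind (fun _ => ind (fun _ => rfl) b) a

theorem lift_of (v : V) : lift φ hφ (of v) = φ v := rfl

end lift

end FreeVectorLattice

open FreeVectorLattice in
theorem exists_free_vector_lattice_general (V : Type) [AddCommGroup V] [Module ℝ V]
    (C : Set V) :
    Nonempty (FreeVectorLatticeWitness V C) :=
  ⟨{ F := FreeVectorLattice C
     j := of
     j_pos := fun _ => of_nonneg
     universal := fun _ _ φ hφ =>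
       ⟨lift φ hφ, ⟨lift_sup φ hφ, lift_of φ hφ⟩, fun _ ⟨hψ, hψφ⟩ =>
         hom_ext hψ (lift_sup φ hφ) fun v => (hψφ v).trans (lift_of φ hφ v).symm⟩
     generated := fun _ hof hadd hsmul hsup _ => induction_on hof hadd hsmul hsup }⟩

/-- Every pre-ordered real vector space admits a free vector lattice over it, generated
by the image of the canonical positive linear map. -/
theorem exists_free_vector_lattice (V : Type) [AddCommGroup V] [Module ℝ V]
    (C : Set V) (hC : IsWedge C) :
    Nonempty (FreeVectorLatticeWitness V C) :=
  exists_free_vector_lattice_general V C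
end

section
/- Let (X, X⁺) be a pre-ordered Banach space in which X⁺ is a closed cone (a closed wedge with X⁺ ∩ (−X⁺) = {0}), and let (j, F) be a free Banach lattice over (X, X⁺). Then j is bipositive: for x ∈ X, j(x) ≥ 0 in F if and only if x ∈ X⁺. -/
/-- The positive part of the dual unit ball of the pre-ordered Banach space `(X, C)`:
continuous linear functionals of norm at most 1 that are nonnegative on `C`. -/
def PosDualBall {X : Type} [NormedAddCommGroup X] [NormedSpace ℝ X] (C : Set X)
    (f : X →L[ℝ] ℝ) : Prop :=
  ‖f‖ ≤ 1 ∧ ∀ x ∈ C, 0 ≤ f x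

/-- `(j, F)` is a free Banach lattice over the pre-ordered Banach space `(X, C)`:
`j` is a positive contraction, and every positive contraction from `X` into a Banach
lattice factors uniquely through `j` via a contractive vector lattice homomorphism. -/
def IsFreeBanachLattice (X : Type) [NormedAddCommGroup X] [NormedSpace ℝ X]
    [CompleteSpace X] (C : Set X)
    (F : Type) [NormedAddCommGroup F] [Lattice F] [IsOrderedAddMonoid F] [HasSolidNorm F] [NormedSpace ℝ F] [CompleteSpace F]
    (j : X →L[ℝ] F) : Prop :=
  ‖j‖ ≤ 1 ∧ (∀ x ∈ C, 0 ≤ j x) ∧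
  ∀ (G : Type) [NormedAddCommGroup G] [Lattice G] [IsOrderedAddMonoid G] [HasSolidNorm G] [NormedSpace ℝ G] [CompleteSpace G],
    ∀ φ : X →L[ℝ] G, ‖φ‖ ≤ 1 → (∀ x ∈ C, 0 ≤ φ x) →
      ∃! ψ : F →L[ℝ] G, ‖ψ‖ ≤ 1 ∧ (∀ a b : F, ψ (a ⊔ b) = ψ a ⊔ ψ b) ∧
        ∀ x : X, ψ (j x) = φ x

/-
Positivity of `j` is part of freeness. Conversely, if `x ∉ X⁺`, Hahn–Banach separation
for the closed convex cone `X⁺` gives a functional `g` in the positive part of the dual unit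
ball with `g x < 0`. Its lattice-homomorphic extension `ψ : F → ℝ` is positive, so
`0 ≤ j x` would force `0 ≤ ψ (j x) = g x`.
-/

namespace IsWedge

variable {X : Type} [NormedAddCommGroup X] [NormedSpace ℝ X] {C : Set X}

def toProperCone (hC : IsWedge C) (hclosed : IsClosed C) : ProperCone ℝ X where
  carrier := C
  zero_mem' := hC.1
  add_mem' {x y} hx hy := by simpa using hC.2 1 1 x y zero_le_one zero_le_one hx hy
  smul_mem' c x hx := by simpa using hC.2 c 0 x x c.2 le_rfl hx hx
  isClosed' := hclosed

theorem exists_posDualBall_neg (hC : IsWedge C) (hclosed : IsClosed C) {x : X} (hx : x ∉ C) :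
    ∃ g : X →L[ℝ] ℝ, PosDualBall C g ∧ g x < 0 := by
  obtain ⟨f, hfC, hfx⟩ := (hC.toProperCone hclosed).hyperplane_separation_point hx
  have hf : f ≠ 0 := by rintro rfl; simp at hfx
  refine ⟨(‖f‖⁻¹ : ℝ) • f, ⟨(norm_smul_inv_norm hf).le, fun y hy => ?_⟩, ?_⟩
  · exact mul_nonneg (inv_nonneg.mpr (norm_nonneg f)) (hfC y hy)
  · exact mul_neg_of_pos_of_neg (inv_pos.mpr (norm_pos_iff.mpr hf)) hfx

end IsWedge

theorem nonneg_apply_of_map_sup {F G H : Type} [Lattice F] [Zero F] [Lattice G] [Zero G]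
    [FunLike H F G] [ZeroHomClass H F G] {ψ : H} (hψ : ∀ a b : F, ψ (a ⊔ b) = ψ a ⊔ ψ b)
    {a : F} (ha : 0 ≤ a) :
    0 ≤ ψ a := by
  simpa [sup_eq_left.mpr ha] using hψ a 0

theorem free_banach_lattice_bipositive_general
    (X : Type) [NormedAddCommGroup X] [NormedSpace ℝ X] [CompleteSpace X]
    (C : Set X) (hC : IsWedge C) (hclosed : IsClosed C)
    (F : Type) [NormedAddCommGroup F] [Lattice F] [IsOrderedAddMonoid F] [HasSolidNorm F] [NormedSpace ℝ F] [CompleteSpace F]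
    (j : X →L[ℝ] F) (hfree : IsFreeBanachLattice X C F j) :
    ∀ x : X, 0 ≤ j x ↔ x ∈ C := by
  intro x
  refine ⟨fun hjx => ?_, hfree.2.1 x⟩
  by_contra hx
  obtain ⟨g, ⟨hg_norm, hg_pos⟩, hgx⟩ := hC.exists_posDualBall_neg hclosed hx
  obtain ⟨ψ, ⟨-, hψ_sup, hψ_j⟩, -⟩ := hfree.2.2 ℝ g hg_norm hg_pos
  have hψ_pos : 0 ≤ ψ (j x) := nonneg_apply_of_map_sup hψ_sup hjx
  linarith [hψ_j x]

/-- If `X⁺` is a closed cone in the Banach space `X` and `(j, F)` is a free Banach lattice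
over `(X, X⁺)`, then `j` is bipositive. -/
theorem free_banach_lattice_bipositive
    (X : Type) [NormedAddCommGroup X] [NormedSpace ℝ X] [CompleteSpace X]
    (C : Set X) (hC : IsWedge C) (hclosed : IsClosed C) (hcone : C ∩ (-C) = {0})
    (F : Type) [NormedAddCommGroup F] [Lattice F] [IsOrderedAddMonoid F] [HasSolidNorm F] [NormedSpace ℝ F] [CompleteSpace F]
    (j : X →L[ℝ] F) (hfree : IsFreeBanachLattice X C F j) :
    ∀ x : X, 0 ≤ j x ↔ x ∈ C :=
  free_banach_lattice_bipositive_general X C hC hclosed F j hfree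
end

section
/- Let (X, X⁺) be a pre-ordered Banach space and let (j, F) be a free Banach lattice over (X, X⁺). For x ∈ X, j(x) = 0 if and only if x*(x) = 0 for all x* ∈ Bₓ*⁺. Consequently, j is injective if and only if Bₓ*⁺ separates the points of X. -/
/-! Every `g ∈ B_{X*}⁺` is a positive contraction into the Banach lattice `ℝ`, so it factors through
`j` and vanishes on `ker j`. Conversely, the positive cone of a Banach lattice is closed and convex,
so by Hahn–Banach an element `j x ≠ 0` is detected by a positive functional of norm at most one;
composed with `j`, it lies in `B_{X*}⁺` and does not vanish at `x`. -/

section LatticeOrderedGroup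

variable {E : Type*} [AddCommGroup E] [Lattice E] [IsOrderedAddMonoid E]

theorem nonneg_of_two_pow_nsmul_nonneg_s10 {a : E} : ∀ {k : ℕ}, 0 ≤ 2 ^ k • a → 0 ≤ a
  | 0, h => by simpa using h
  | k + 1, h => nonneg_of_two_pow_nsmul_nonneg_s10 <| nsmul_two_semiclosed <| by
      rwa [← mul_nsmul', ← pow_succ']

variable [Module ℝ E]

theorem dyadic_smul_nonneg {v : E} (hv : 0 ≤ v) (m k : ℕ) : 0 ≤ ((m : ℝ) / 2 ^ k) • v := by
  refine nonneg_of_two_pow_nsmul_nonneg_s10 (k := k) ?_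
  rw [← Nat.cast_smul_eq_nsmul ℝ, smul_smul, Nat.cast_pow, Nat.cast_ofNat,
    mul_div_cancel₀ _ (by positivity), Nat.cast_smul_eq_nsmul]
  exact nsmul_nonneg hv m

/-- In a lattice-ordered real vector space, positivity of `t • v` is not automatic; it follows from
the closedness of the positive cone by approximating `t` with dyadic rationals. -/
theorem posSMulMono_of_closedIciTopology [TopologicalSpace E] [ClosedIciTopology E]
    [ContinuousSMul ℝ E] : PosSMulMono ℝ E :=
  .of_smul_nonneg fun _ ht v hv =>
    ge_of_tendsto' (((tendsto_nat_floor_mul_div_atTop ht).comp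
      (tendsto_pow_atTop_atTop_of_one_lt one_lt_two)).smul_const v)
      fun n => dyadic_smul_nonneg hv _ n

theorem exists_nonneg_dual_neg_of_not_nonneg [TopologicalSpace E] [IsTopologicalAddGroup E]
    [ContinuousSMul ℝ E] [LocallyConvexSpace ℝ E] [OrderClosedTopology E] {a : E}
    (ha : ¬ 0 ≤ a) : ∃ f : StrongDual ℝ E, (∀ y, 0 ≤ y → 0 ≤ f y) ∧ f a < 0 := by
  have := posSMulMono_of_closedIciTopology (E := E)
  simpa using (ProperCone.positive ℝ E).hyperplane_separation_point (x₀ := a) (by simpa using ha)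

theorem exists_nonneg_dual_ne_zero [TopologicalSpace E] [IsTopologicalAddGroup E]
    [ContinuousSMul ℝ E] [LocallyConvexSpace ℝ E] [OrderClosedTopology E] {a : E}
    (ha : a ≠ 0) : ∃ f : StrongDual ℝ E, (∀ y, 0 ≤ y → 0 ≤ f y) ∧ f a ≠ 0 := by
  by_cases h : 0 ≤ a
  · obtain ⟨f, hf, hfa⟩ := exists_nonneg_dual_neg_of_not_nonneg (a := -a)
      fun h' => ha (le_antisymm (neg_nonneg.1 h') h)
    exact ⟨f, hf, by simpa using hfa.ne⟩
  · obtain ⟨f, hf, hfa⟩ := exists_nonneg_dual_neg_of_not_nonneg h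
    exact ⟨f, hf, hfa.ne⟩

end LatticeOrderedGroup

theorem exists_nonneg_dual_norm_le_one_ne_zero {E : Type*} [NormedAddCommGroup E] [Lattice E]
    [IsOrderedAddMonoid E] [HasSolidNorm E] [NormedSpace ℝ E] {a : E} (ha : a ≠ 0) :
    ∃ f : StrongDual ℝ E, ‖f‖ ≤ 1 ∧ (∀ y, 0 ≤ y → 0 ≤ f y) ∧ f a ≠ 0 := by
  obtain ⟨f, hf, hfa⟩ := exists_nonneg_dual_ne_zero ha
  have hf₀ : f ≠ 0 := fun h => hfa (by simp [h])
  refine ⟨‖f‖⁻¹ • f, by simpa using inv_norm_smul_mem_unitClosedBall f, fun y hy => ?_, ?_⟩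
  · simpa using mul_nonneg (inv_nonneg.2 (norm_nonneg f)) (hf y hy)
  · simpa [hf₀] using hfa

theorem injective_iff_separates_of_map_eq_zero_iff {X Y Z 𝓕 𝓖 : Type*} [AddCommGroup X]
    [AddCommGroup Y] [AddCommGroup Z] [FunLike 𝓕 X Y] [AddMonoidHomClass 𝓕 X Y]
    [FunLike 𝓖 X Z] [AddMonoidHomClass 𝓖 X Z] {j : 𝓕} {P : 𝓖 → Prop}
    (hker : ∀ x, j x = 0 ↔ ∀ g, P g → g x = 0) :
    Function.Injective j ↔ ∀ x y, x ≠ y → ∃ g, P g ∧ g x ≠ g y := by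
  simp only [injective_iff_map_eq_zero, hker]
  constructor
  · intro h x y hxy
    by_contra! hall
    exact hxy (sub_eq_zero.1 (h _ fun g hg => by rw [map_sub, hall g hg, sub_self]))
  · intro h x hx
    by_contra hx₀
    obtain ⟨g, hg, hgx⟩ := h x 0 hx₀
    exact hgx (by rw [hx g hg, map_zero])

namespace IsFreeBanachLattice

variable {X : Type} [NormedAddCommGroup X] [NormedSpace ℝ X] [CompleteSpace X] {C : Set X}
  {F : Type} [NormedAddCommGroup F] [Lattice F] [IsOrderedAddMonoid F] [HasSolidNorm F]
  [NormedSpace ℝ F] [CompleteSpace F] {j : X →L[ℝ] F}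

theorem posDualBall_comp (hfree : IsFreeBanachLattice X C F j) {f : StrongDual ℝ F}
    (hf : ‖f‖ ≤ 1) (hf_nonneg : ∀ y, 0 ≤ y → 0 ≤ f y) : PosDualBall C (f.comp j) :=
  ⟨(f.opNorm_comp_le j).trans (mul_le_one₀ hf (norm_nonneg j) hfree.1),
    fun x hx => hf_nonneg _ (hfree.2.1 x hx)⟩

theorem apply_eq_zero_of_map_eq_zero (hfree : IsFreeBanachLattice X C F j) {x : X}
    (hx : j x = 0) {g : StrongDual ℝ X} (hg : PosDualBall C g) : g x = 0 := by
  obtain ⟨ψ, ⟨-, -, hψj⟩, -⟩ := hfree.2.2 ℝ g hg.1 hg.2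
  rw [← hψj, hx, map_zero]

theorem map_eq_zero_iff (hfree : IsFreeBanachLattice X C F j) (x : X) :
    j x = 0 ↔ ∀ g : X →L[ℝ] ℝ, PosDualBall C g → g x = 0 := by
  refine ⟨hfree.apply_eq_zero_of_map_eq_zero, fun hall => ?_⟩
  by_contra hx
  obtain ⟨f, hf, hf_nonneg, hfx⟩ := exists_nonneg_dual_norm_le_one_ne_zero hx
  exact hfx (hall _ (hfree.posDualBall_comp hf hf_nonneg))

end IsFreeBanachLattice

theorem free_banach_lattice_kernel_characterisation_general
    (X : Type) [NormedAddCommGroup X] [NormedSpace ℝ X] [CompleteSpace X]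
    (C : Set X)
    (F : Type) [NormedAddCommGroup F] [Lattice F] [IsOrderedAddMonoid F] [HasSolidNorm F] [NormedSpace ℝ F] [CompleteSpace F]
    (j : X →L[ℝ] F) (hfree : IsFreeBanachLattice X C F j) :
    (∀ x : X, j x = 0 ↔ ∀ g : X →L[ℝ] ℝ, PosDualBall C g → g x = 0) ∧
    (Function.Injective j ↔
      ∀ x y : X, x ≠ y → ∃ g : X →L[ℝ] ℝ, PosDualBall C g ∧ g x ≠ g y) :=
  ⟨hfree.map_eq_zero_iff, injective_iff_separates_of_map_eq_zero_iff hfree.map_eq_zero_iff⟩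

/-- For a free Banach lattice `(j, F)` over a pre-ordered Banach space `(X, X⁺)`:
`j x = 0` if and only if all elements of the positive part of the dual unit ball vanish
at `x`; consequently `j` is injective if and only if the positive part of the dual unit
ball separates the points of `X`. -/
theorem free_banach_lattice_kernel_characterisation
    (X : Type) [NormedAddCommGroup X] [NormedSpace ℝ X] [CompleteSpace X]
    (C : Set X) (hC : IsWedge C)
    (F : Type) [NormedAddCommGroup F] [Lattice F] [IsOrderedAddMonoid F] [HasSolidNorm F] [NormedSpace ℝ F] [CompleteSpace F]
    (j : X →L[ℝ] F) (hfree : IsFreeBanachLattice X C F j) :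
    (∀ x : X, j x = 0 ↔ ∀ g : X →L[ℝ] ℝ, PosDualBall C g → g x = 0) ∧
    (Function.Injective j ↔
      ∀ x y : X, x ≠ y → ∃ g : X →L[ℝ] ℝ, PosDualBall C g ∧ g x ≠ g y) :=
  free_banach_lattice_kernel_characterisation_general X C F j hfree
end

section
/- Let (X, X⁺) be a pre-ordered Banach space and let (j, F) be a free Banach lattice over (X, X⁺). Then for every x ∈ X⁺, ‖j(x)‖ = max_{x* ∈ Bₓ*⁺} x*(x): one has x*(x) ≤ ‖j(x)‖ for every x* ∈ Bₓ*⁺, and there exists x* ∈ Bₓ*⁺ with x*(x) = ‖j(x)‖. -/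
/-!
A positive functional `x*` in the dual unit ball is itself a positive contraction into the
Banach lattice `ℝ`, so it factors through `j` by a contractive lattice homomorphism; hence
`x* x ≤ ‖j x‖`. Conversely, for `x, c ∈ X⁺` we have `0 ≤ j x ≤ j (x + c)`, so solidity of the
norm gives `‖j x‖ ≤ ‖x + c‖`, i.e. `‖j x‖ ≤ dist(x, -X⁺)`. Since `-X⁺` is a convex cone,
`dist(·, -X⁺)` is sublinear and bounded by the norm, and Hahn–Banach yields a functional of
norm `≤ 1`, nonpositive on `-X⁺`, taking the value `dist(x, -X⁺)` at `x`.
-/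

open Metric Pointwise

namespace IsWedge

variable {X : Type} [NormedAddCommGroup X] [NormedSpace ℝ X] {S : Set X}

theorem smul_mem (hS : IsWedge S) {t : ℝ} (ht : 0 ≤ t) {x : X} (hx : x ∈ S) : t • x ∈ S := by
  simpa using hS.2 t 0 x x ht le_rfl hx hx

theorem add_mem (hS : IsWedge S) {x y : X} (hx : x ∈ S) (hy : y ∈ S) : x + y ∈ S := by
  simpa using hS.2 1 1 x y zero_le_one zero_le_one hx hy

theorem neg (hS : IsWedge S) : IsWedge (-S) := by
  refine ⟨by simpa using hS.1, fun a b x y ha hb hx hy => ?_⟩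
  have := hS.2 a b (-x) (-y) ha hb hx hy
  rwa [smul_neg, smul_neg, ← neg_add] at this

theorem smul_set_eq (hS : IsWedge S) {t : ℝ} (ht : 0 < t) : t • S = S := by
  refine (Set.smul_set_subset_iff.2 fun x hx => hS.smul_mem ht.le hx).antisymm fun x hx => ?_
  exact ⟨t⁻¹ • x, hS.smul_mem (inv_nonneg.2 ht.le) hx, smul_inv_smul₀ ht.ne' x⟩

theorem infDist_smul (hS : IsWedge S) {t : ℝ} (ht : 0 < t) (y : X) :
    infDist (t • y) S = t * infDist y S := by
  conv_lhs => rw [← hS.smul_set_eq ht]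
  rw [infDist_smul₀ ht.ne', Real.norm_of_nonneg ht.le]

theorem infDist_add_le (hS : IsWedge S) (y z : X) :
    infDist (y + z) S ≤ infDist y S + infDist z S := by
  refine le_of_forall_pos_lt_add fun ε hε => ?_
  obtain ⟨a, ha, hya⟩ := (infDist_lt_iff ⟨0, hS.1⟩).1
    (lt_add_of_pos_right (infDist y S) (half_pos hε))
  obtain ⟨b, hb, hzb⟩ := (infDist_lt_iff ⟨0, hS.1⟩).1
    (lt_add_of_pos_right (infDist z S) (half_pos hε))
  calc infDist (y + z) S ≤ dist (y + z) (a + b) := infDist_le_dist_of_mem (hS.add_mem ha hb)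
    _ ≤ dist y a + dist z b := dist_add_add_le _ _ _ _
    _ < _ := by linarith

theorem exists_linear_le_infDist (hS : IsWedge S) (x : X) :
    ∃ g : X →ₗ[ℝ] ℝ, (∀ y, g y ≤ infDist y S) ∧ g x = infDist x S := by
  have hker : ∀ c : ℝ, c • x = 0 → c • infDist x S = 0 := fun c hc => by
    rcases smul_eq_zero.1 hc with rfl | rfl
    · exact zero_smul ℝ _
    · rw [infDist_zero_of_mem hS.1, smul_zero]
  let f : X →ₗ.[ℝ] ℝ := LinearPMap.mkSpanSingleton' (σ := RingHom.id ℝ) x (infDist x S) hker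
  have hf : ∀ y : f.domain, f y ≤ infDist (y : X) S := by
    rintro ⟨y, hy⟩
    obtain ⟨c, rfl⟩ := Submodule.mem_span_singleton.1 hy
    rw [LinearPMap.mkSpanSingleton'_apply, RingHom.id_apply, smul_eq_mul]
    rcases le_or_gt c 0 with hc | hc
    · exact (mul_nonpos_of_nonpos_of_nonneg hc infDist_nonneg).trans infDist_nonneg
    · exact (hS.infDist_smul hc x).ge
  obtain ⟨g, hgf, hg⟩ := exists_extension_of_le_sublinear f (infDist · S)
    (fun c hc y => hS.infDist_smul hc y) hS.infDist_add_le hf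
  refine ⟨g, hg, ?_⟩
  rw [← LinearPMap.mkSpanSingleton'_apply_self (σ := RingHom.id ℝ) x (infDist x S) hker
    (Submodule.mem_span_singleton_self x)]
  exact hgf ⟨x, _⟩

theorem exists_dual_eq_infDist (hS : IsWedge S) (x : X) :
    ∃ g : X →L[ℝ] ℝ, ‖g‖ ≤ 1 ∧ (∀ s ∈ S, g s ≤ 0) ∧ g x = infDist x S := by
  obtain ⟨g, hg, hgx⟩ := hS.exists_linear_le_infDist x
  have hle_norm : ∀ y, g y ≤ ‖y‖ := fun y =>
    (hg y).trans (by simpa using infDist_le_dist_of_mem (x := y) hS.1)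
  have hbound : ∀ y, ‖g y‖ ≤ 1 * ‖y‖ := fun y => by
    rw [one_mul, Real.norm_eq_abs, abs_le]
    have hneg := hle_norm (-y)
    rw [map_neg, norm_neg] at hneg
    exact ⟨by linarith, hle_norm y⟩
  refine ⟨g.mkContinuous 1 hbound, LinearMap.mkContinuous_norm_le _ zero_le_one _,
    fun s hs => ?_, hgx⟩
  simpa [infDist_zero_of_mem hs] using hg s

end IsWedge

theorem norm_map_le_infDist_neg {X F : Type} [NormedAddCommGroup X] [NormedSpace ℝ X]
    [NormedAddCommGroup F] [Lattice F] [IsOrderedAddMonoid F] [HasSolidNorm F]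
    [NormedSpace ℝ F] {C : Set X} (hC : IsWedge C) (j : X →L[ℝ] F) (hj : ‖j‖ ≤ 1)
    (hjC : ∀ x ∈ C, 0 ≤ j x) {x : X} (hx : x ∈ C) : ‖j x‖ ≤ infDist x (-C) := by
  refine (le_infDist ⟨0, by simpa using hC.1⟩).2 fun y hy => ?_
  have hjx : j x ≤ j (x - y) := by
    simpa [sub_eq_add_neg] using hjC (-y) (Set.mem_neg.1 hy)
  calc ‖j x‖ ≤ ‖j (x - y)‖ :=
        norm_le_norm_of_abs_le_abs (by
          rwa [abs_of_nonneg (hjC x hx), abs_of_nonneg ((hjC x hx).trans hjx)])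
    _ ≤ ‖x - y‖ := (j.le_of_opNorm_le hj _).trans_eq (one_mul _)
    _ = dist x y := (dist_eq_norm x y).symm

theorem IsFreeBanachLattice.apply_le_norm {X F : Type} [NormedAddCommGroup X]
    [NormedSpace ℝ X] [CompleteSpace X] {C : Set X} [NormedAddCommGroup F] [Lattice F]
    [IsOrderedAddMonoid F] [HasSolidNorm F] [NormedSpace ℝ F] [CompleteSpace F]
    {j : X →L[ℝ] F} (hfree : IsFreeBanachLattice X C F j) {g : X →L[ℝ] ℝ}
    (hg : PosDualBall C g) (x : X) : g x ≤ ‖j x‖ := by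
  obtain ⟨ψ, ⟨hψ, -, hψj⟩, -⟩ := hfree.2.2 ℝ g hg.1 hg.2
  calc g x = ψ (j x) := (hψj x).symm
    _ ≤ ‖ψ (j x)‖ := le_abs_self _
    _ ≤ ‖j x‖ := ψ.le_of_opNorm_le hψ _ |>.trans_eq (one_mul _)

/-- For a free Banach lattice `(j, F)` over a pre-ordered Banach space `(X, X⁺)` and
`x ∈ X⁺`, the norm `‖j x‖` equals the maximum of `x* x` over the positive part of the
dual unit ball of `X`. -/
theorem free_banach_lattice_norm_of_positive
    (X : Type) [NormedAddCommGroup X] [NormedSpace ℝ X] [CompleteSpace X]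
    (C : Set X) (hC : IsWedge C)
    (F : Type) [NormedAddCommGroup F] [Lattice F] [IsOrderedAddMonoid F] [HasSolidNorm F] [NormedSpace ℝ F] [CompleteSpace F]
    (j : X →L[ℝ] F) (hfree : IsFreeBanachLattice X C F j) :
    ∀ x ∈ C, (∀ g : X →L[ℝ] ℝ, PosDualBall C g → g x ≤ ‖j x‖) ∧
      ∃ g : X →L[ℝ] ℝ, PosDualBall C g ∧ g x = ‖j x‖ := by
  intro x hx
  obtain ⟨g, hg_norm, hg_polar, hgx⟩ := hC.neg.exists_dual_eq_infDist x
  have hg : PosDualBall C g := ⟨hg_norm, fun c hc => by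
    simpa using hg_polar (-c) (Set.neg_mem_neg.2 hc)⟩
  refine ⟨fun g' hg' => hfree.apply_le_norm hg' x, g, hg, le_antisymm (hfree.apply_le_norm hg x) ?_⟩
  exact hgx ▸ norm_map_le_infDist_neg hC j hfree.1 hfree.2.1 hx
end

section
/- Let 1 ≤ p ≤ ∞ with conjugate exponent q (1/p + 1/q = 1), let μ be a measure, let k ≥ 1, and let g₁, …, g_k ∈ L^q(μ) satisfy gᵢ·gⱼ = 0 almost everywhere for all i ≠ j and ‖gᵢ‖_q ≤ 1 for all i. Define ψ : Lᵖ(μ) → ℓᵖ(Fin k) (ℝᵏ with the ℓᵖ-norm) by ψ(f) := (∫ g₁·f dμ, …, ∫ g_k·f dμ). Then ψ is a contraction: ‖ψ(f)‖_{ℓᵖ} ≤ ‖f‖_{Lᵖ(μ)} for all f ∈ Lᵖ(μ). If in addition every gᵢ ≥ 0 a.e., then ψ is positive: f ≥ 0 a.e. implies ψ(f) ≥ 0 coordinatewise. -/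
open scoped ENNReal

/-! Off the support `Aᵢ` of `gᵢ` the integrand `gᵢ f` vanishes, so Hölder's inequality on `Aᵢ`
gives `|∫ gᵢ f| ≤ ‖f‖_{Lᵖ(μ|Aᵢ)}`. For `p = ∞` each of these is at most `‖f‖_∞`; for `p < ∞`
the sets `Aᵢ` are a.e. disjoint, so the `p`-th powers `∫_{Aᵢ} |f|ᵖ` add up to at most `∫ |f|ᵖ`. -/

theorem PiLp.enorm_le_of_sum_rpow_le {ι : Type*} [Fintype ι] {β : ι → Type*}
    [∀ i, SeminormedAddCommGroup (β i)] {p : ℝ≥0∞} [Fact (1 ≤ p)]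
    (hp : p ≠ ∞) (x : PiLp p β) {c : ι → ℝ≥0∞} {C : ℝ≥0∞}
    (hx : ∀ i, ‖x i‖ₑ ≤ c i) (h : ∑ i, c i ^ p.toReal ≤ C ^ p.toReal) :
    ‖x‖ₑ ≤ C := by
  have hpr : 0 < p.toReal := ENNReal.toReal_pos (zero_lt_one.trans_le Fact.out).ne' hp
  have hnorm : ‖x‖ₑ = (∑ i, ‖x i‖ₑ ^ p.toReal) ^ (1 / p.toReal) := by
    simp only [enorm_eq_nnnorm, PiLp.nnnorm_eq_sum hp]
    rw [ENNReal.coe_rpow_of_nonneg _ (by positivity), ENNReal.ofNNReal_finsetSum]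
    simp only [ENNReal.coe_rpow_of_nonneg _ hpr.le]
  calc ‖x‖ₑ ≤ (∑ i, c i ^ p.toReal) ^ (1 / p.toReal) := by
        rw [hnorm]; gcongr with i; exact hx i
    _ ≤ (C ^ p.toReal) ^ (1 / p.toReal) := by gcongr
    _ = C := by rw [one_div, ENNReal.rpow_rpow_inv hpr.ne']

theorem PiLp.enorm_le_of_forall_enorm_le {ι : Type*} [Fintype ι] {β : ι → Type*}
    [∀ i, SeminormedAddCommGroup (β i)] (x : PiLp ∞ β) {C : ℝ≥0∞} (hx : ∀ i, ‖x i‖ₑ ≤ C) : ‖x‖ₑ ≤ C := by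
  rw [← edist_zero_right, PiLp.edist_eq_iSup]
  exact iSup_le fun i => by simpa using hx i

namespace MeasureTheory

open Function

variable {α : Type*} [MeasurableSpace α] {μ : Measure α}

theorem aedisjoint_support_of_ae_mul_eq_zero {M₀ : Type*} [MulZeroClass M₀] [NoZeroDivisors M₀]
    {u v : α → M₀} (h : ∀ᵐ x ∂μ, u x * v x = 0) : AEDisjoint μ (support u) (support v) := by
  rw [AEDisjoint, ← support_mul]
  exact ae_iff.1 h

theorem enorm_integral_mul_le_eLpNorm_mul_eLpNorm_restrict_support {p q : ℝ≥0∞}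
    [ENNReal.HolderConjugate p q] {u v : α → ℝ} (hu : AEStronglyMeasurable u μ)
    (hv : AEStronglyMeasurable v μ) :
    ‖∫ x, u x * v x ∂μ‖ₑ ≤ eLpNorm u q μ * eLpNorm v p (μ.restrict (support u)) := by
  have hsupp : ∀ x ∉ support u, u x * v x = 0 := fun x hx => by
    rw [notMem_support.1 hx, zero_mul]
  rw [← setIntegral_eq_integral_of_forall_compl_eq_zero hsupp]
  calc ‖∫ x in support u, u x * v x ∂μ‖ₑ
      ≤ eLpNorm (u • v) 1 (μ.restrict (support u)) :=
        (enorm_integral_le_lintegral_enorm _).trans_eq eLpNorm_one_eq_lintegral_enorm.symm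
    _ ≤ eLpNorm u q (μ.restrict (support u)) * eLpNorm v p (μ.restrict (support u)) :=
        eLpNorm_smul_le_mul_eLpNorm hv.restrict hu.restrict
    _ ≤ eLpNorm u q μ * eLpNorm v p (μ.restrict (support u)) := by
        gcongr; exact Measure.restrict_le_self

theorem sum_eLpNorm_restrict_rpow_le {ι E : Type*} [Fintype ι] [NormedAddCommGroup E]
    {p : ℝ≥0∞} (hp0 : p ≠ 0) (hp : p ≠ ∞) {s : ι → Set α}
    (hs : ∀ i, NullMeasurableSet (s i) μ) (hd : Pairwise (AEDisjoint μ on s)) (f : α → E) :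
    ∑ i, eLpNorm f p (μ.restrict (s i)) ^ p.toReal ≤ eLpNorm f p μ ^ p.toReal := by
  have hpr : 0 < p.toReal := ENNReal.toReal_pos hp0 hp
  simp only [eLpNorm_eq_eLpNorm' hp0 hp, ← lintegral_rpow_enorm_eq_rpow_eLpNorm' hpr]
  calc ∑ i, ∫⁻ x in s i, ‖f x‖ₑ ^ p.toReal ∂μ
      = ∫⁻ x in ⋃ i, s i, ‖f x‖ₑ ^ p.toReal ∂μ := by
        rw [lintegral_iUnion₀ hs hd, tsum_fintype]
    _ ≤ ∫⁻ x, ‖f x‖ₑ ^ p.toReal ∂μ := setLIntegral_le_lintegral _ _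

theorem Lp.norm_toLp_integral_mul_le {ι : Type*} [Fintype ι] {p q : ℝ≥0∞}
    [hpq : ENNReal.HolderConjugate p q] (g : ι → Lp ℝ q μ)
    (hdisj : Pairwise fun i j => ∀ᵐ x ∂μ, g i x * g j x = 0) (hnorm : ∀ i, ‖g i‖ ≤ 1)
    (f : Lp ℝ p μ) :
    ‖WithLp.toLp p fun i => ∫ x, g i x * f x ∂μ‖ ≤ ‖f‖ := by
  have : Fact (1 ≤ p) := ⟨hpq.one_le⟩
  have hcoord : ∀ i, ‖∫ x, g i x * f x ∂μ‖ₑ ≤ eLpNorm f p (μ.restrict (support (g i))) := by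
    intro i
    have hgi : eLpNorm (g i) q μ ≤ 1 := by
      rw [← ENNReal.toReal_le_toReal (Lp.eLpNorm_ne_top _) ENNReal.one_ne_top]
      simpa [Lp.norm_def] using hnorm i
    calc _ ≤ eLpNorm (g i) q μ * eLpNorm f p (μ.restrict (support (g i))) :=
          enorm_integral_mul_le_eLpNorm_mul_eLpNorm_restrict_support
            (Lp.aestronglyMeasurable _) (Lp.aestronglyMeasurable _)
      _ ≤ _ := by simpa using mul_le_mul_left hgi _
  suffices ‖WithLp.toLp p fun i => ∫ x, g i x * f x ∂μ‖ₑ ≤ ‖f‖ₑ by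
    rw [← toReal_enorm, ← toReal_enorm f]; exact ENNReal.toReal_mono enorm_ne_top this
  rw [Lp.enorm_def]
  by_cases hp : p = ∞
  · subst hp
    exact PiLp.enorm_le_of_forall_enorm_le _ fun i =>
      (hcoord i).trans (eLpNorm_restrict_le _ _ _ _)
  · exact PiLp.enorm_le_of_sum_rpow_le hp _ hcoord <| sum_eLpNorm_restrict_rpow_le hpq.pos.ne' hp
      (fun i => (Lp.stronglyMeasurable (g i)).measurableSet_support.nullMeasurableSet)
      (fun i j hij => aedisjoint_support_of_ae_mul_eq_zero (hdisj hij)) _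

end MeasureTheory

open MeasureTheory

theorem disjoint_functions_yield_contraction_general
    (Ω : Type) [MeasurableSpace Ω] (μ : MeasureTheory.Measure Ω)
    (p q : ℝ≥0∞) (hpq : p⁻¹ + q⁻¹ = 1)
    (k : ℕ) (g : Fin k → MeasureTheory.Lp ℝ q μ)
    (hdisj : ∀ i j : Fin k, i ≠ j → ∀ᵐ ω ∂μ, g i ω * g j ω = 0)
    (hnorm : ∀ i, ‖g i‖ ≤ 1) :
    (∀ f : MeasureTheory.Lp ℝ p μ,
        ‖(WithLp.equiv p (Fin k → ℝ)).symm (fun i => ∫ ω, g i ω * f ω ∂μ)‖ ≤ ‖f‖) ∧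
    ((∀ i, ∀ᵐ ω ∂μ, 0 ≤ g i ω) →
      ∀ f : MeasureTheory.Lp ℝ p μ, (∀ᵐ ω ∂μ, 0 ≤ f ω) →
        ∀ i : Fin k, 0 ≤ ∫ ω, g i ω * f ω ∂μ) := by
  have : ENNReal.HolderConjugate p q := ⟨by rw [hpq, inv_one]⟩
  refine ⟨Lp.norm_toLp_integral_mul_le g hdisj hnorm,
    fun hg f hf i => integral_nonneg_of_ae ?_⟩
  filter_upwards [hg i, hf] with ω hgω hfω
  exact mul_nonneg hgω hfω

/-- If `g₁, …, g_k ∈ L^q(μ)` are pairwise a.e. disjoint (products vanish a.e.) and of norm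
at most 1, then `f ↦ (∫ g₁ ⬝ f dμ, …, ∫ g_k ⬝ f dμ)` is a contraction from `Lᵖ(μ)` to
`ℓᵖ(Fin k)`; it is positive if all `gᵢ` are a.e. nonnegative. -/
theorem disjoint_functions_yield_contraction
    (Ω : Type) [MeasurableSpace Ω] (μ : MeasureTheory.Measure Ω)
    (p q : ℝ≥0∞) [Fact (1 ≤ p)] (hpq : p⁻¹ + q⁻¹ = 1)
    (k : ℕ) (hk : 1 ≤ k) (g : Fin k → MeasureTheory.Lp ℝ q μ)
    (hdisj : ∀ i j : Fin k, i ≠ j → ∀ᵐ ω ∂μ, g i ω * g j ω = 0)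
    (hnorm : ∀ i, ‖g i‖ ≤ 1) :
    (∀ f : MeasureTheory.Lp ℝ p μ,
        ‖(WithLp.equiv p (Fin k → ℝ)).symm (fun i => ∫ ω, g i ω * f ω ∂μ)‖ ≤ ‖f‖) ∧
    ((∀ i, ∀ᵐ ω ∂μ, 0 ≤ g i ω) →
      ∀ f : MeasureTheory.Lp ℝ p μ, (∀ᵐ ω ∂μ, 0 ≤ f ω) →
        ∀ i : Fin k, 0 ≤ ∫ ω, g i ω * f ω ∂μ) :=
  disjoint_functions_yield_contraction_general Ω μ p q hpq k g hdisj hnorm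
end
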